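/- Smallness of a product of clipped factors against a large sum: let f : ℕ → ℝ satisfy 0 ≤ f(i) ≤ 1 for all i, let ε > 0, and let n ∈ ℕ be such that ∑_{i=1}^{n} f(i) ≥ 1/ε. Then ∏_{i=1}^{n} (1 - max(f(i) - 2^{-i}, 0)) ≤ ε. -/
import Mathlib

lemma one_add_sum_le_prod (s : Finset ℕ) (a : ℕ → ℝ) (ha : ∀ i ∈ s, 0 ≤ a i) :
    1 + ∑ i ∈ s, a i ≤ ∏ i ∈ s, (1 + a i) := by
  induction s using Finset.induction with
  | empty => simp
  | @insert x s hx ih =>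
    rw [Finset.sum_insert hx, Finset.prod_insert hx]
    have h1 : 0 ≤ a x := ha x (Finset.mem_insert_self _ _)
    have h2 : 1 + ∑ i ∈ s, a i ≤ ∏ i ∈ s, (1 + a i) :=
      ih fun i hi => ha i (Finset.mem_insert_of_mem hi)
    have hs : 0 ≤ ∑ i ∈ s, a i := Finset.sum_nonneg fun i hi => ha i (Finset.mem_insert_of_mem hi)
    nlinarith

theorem clipped_product_small
    (f : ℕ → ℝ) (hf : ∀ i, 0 ≤ f i ∧ f i ≤ 1)
    (ε : ℝ) (hε : 0 < ε) (n : ℕ)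
    (hsum : 1 / ε ≤ ∑ i ∈ Finset.Icc 1 n, f i) :
    ∏ i ∈ Finset.Icc 1 n, (1 - max (f i - (1 / 2 : ℝ) ^ i) 0) ≤ ε := by
  set s := Finset.Icc 1 n
  set a : ℕ → ℝ := fun i => max (f i - (1 / 2 : ℝ) ^ i) 0 with ha_def
  have ha0 : ∀ i ∈ s, 0 ≤ a i := fun i _ => le_max_right _ _
  have ha1 : ∀ i ∈ s, a i ≤ 1 := by
    intro i _
    apply max_le _ zero_le_one
    have := (hf i).2
    have : (0:ℝ) ≤ (1/2:ℝ)^i := by positivity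
    linarith [(hf i).2]
  -- geometric sum bound
  have hgeo : ∑ i ∈ s, (1/2 : ℝ) ^ i ≤ 1 := by
    have : ∀ m : ℕ, ∑ i ∈ Finset.Icc 1 m, (1/2 : ℝ) ^ i = 1 - (1/2)^m := by
      intro m
      induction m with
      | zero => simp
      | succ k ih =>
        rw [Finset.sum_Icc_succ_top (by omega), ih]
        ring
    rw [this n]
    have : (0:ℝ) ≤ (1/2:ℝ)^n := by positivity
    linarith
  have hsa : 1 / ε - 1 ≤ ∑ i ∈ s, a i := by
    have h1 : ∑ i ∈ s, (f i - (1/2:ℝ)^i) ≤ ∑ i ∈ s, a i :=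
      Finset.sum_le_sum fun i _ => le_max_left _ _
    rw [Finset.sum_sub_distrib] at h1
    linarith
  have hprod1 : 1 + ∑ i ∈ s, a i ≤ ∏ i ∈ s, (1 + a i) := one_add_sum_le_prod s a ha0
  have hmul : (∏ i ∈ s, (1 - a i)) * (∏ i ∈ s, (1 + a i)) ≤ 1 := by
    rw [← Finset.prod_mul_distrib]
    apply Finset.prod_le_one
    · intro i hi
      have := ha1 i hi; have := ha0 i hi
      nlinarith
    · intro i hi
      have := ha1 i hi; have := ha0 i hi
      nlinarith
  have hP0 : 0 ≤ ∏ i ∈ s, (1 - a i) :=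
    Finset.prod_nonneg fun i hi => by linarith [ha1 i hi]
  have hQ : 1 / ε ≤ ∏ i ∈ s, (1 + a i) := by linarith
  have hQ0 : 0 < ∏ i ∈ s, (1 + a i) := lt_of_lt_of_le (by positivity) hQ
  calc ∏ i ∈ s, (1 - a i) ≤ 1 / ∏ i ∈ s, (1 + a i) := by
        rw [le_div_iff₀ hQ0]; exact hmul
    _ ≤ ε := by
        rw [div_le_iff₀ hQ0]
        calc (1:ℝ) = ε * (1/ε) := by field_simp
          _ ≤ ε * ∏ i ∈ s, (1 + a i) := by
              apply mul_le_mul_of_nonneg_left hQ hε.le
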